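/- In the finite-support ω-slice product ℙ of identical posets along slices, if p, q ∈ ℙ agree on s (i.e., p↾s = q↾s as functions) and π ∈ Aut(ω₁×ω, ω) fixes s pointwise and satisfies dom(p) ∩ π[dom(q)] ⊆ s, then p and π*(q) are compatible in ℙ. -/

import Mathlib

universe u v

variable {ι : Type u} {α : Type v}

/-- Conditions of the finite-support ω-slice product over `ι × ω` (the index set
`ω₁` abstracted as `ι`), the values on slice `{ν} × ω` lying in the poset `V ν`. -/
def Cond (ι : Type u) (α : Type v) : Type (max u v) := ι × ℕ → Option α

def dom (p : Cond ι α) : Set (ι × ℕ) := {i | p i ≠ none}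

def FinSupp (p : Cond ι α) : Prop := (dom p).Finite

def Valid (V : ι → Set α) (p : Cond ι α) : Prop := ∀ i a, p i = some a → a ∈ V i.1

def condLE [Preorder α] (p q : Cond ι α) : Prop :=
  ∀ i a, q i = some a → ∃ b, p i = some b ∧ b ≤ a

/-- The automorphism `π*` induced on conditions by a permutation of `ι × ω`. -/
def act (π : Equiv.Perm (ι × ℕ)) (p : Cond ι α) : Cond ι α := fun i => p (π.symm i)

/-!
Put `r i := p i` where `p` is defined and `r i := π*(q) i` elsewhere. This is a common extension
as soon as `p` and `π*(q)` agree where both are defined, and they do: such a point lies in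
`dom p ∩ π[dom q] ⊆ s`, where `π` is the identity and `p = q`. Validity of `π*(q)` uses that `π`
preserves each slice `{ν} × ω`.
-/

def Compatible [Preorder α] (V : ι → Set α) (p q : Cond ι α) : Prop :=
  ∃ r : Cond ι α, FinSupp r ∧ Valid V r ∧ condLE r p ∧ condLE r q

def amalgam (p q : Cond ι α) : Cond ι α := fun i => (p i).or (q i)

section Amalgam

variable {p q : Cond ι α}

theorem dom_amalgam : dom (amalgam p q) = dom p ∪ dom q := by
  ext i
  simp only [dom, amalgam, Set.mem_ofPred_eq, Set.mem_union, ne_eq, Option.or_eq_none_iff,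
    not_and_or]

theorem FinSupp.amalgam (hp : FinSupp p) (hq : FinSupp q) : FinSupp (amalgam p q) := by
  rw [FinSupp, dom_amalgam]
  exact hp.union hq

theorem Valid.amalgam {V : ι → Set α} (hp : Valid V p) (hq : Valid V q) :
    Valid V (amalgam p q) := by
  intro i a h
  rcases Option.or_eq_some_iff.1 h with hpi | ⟨-, hqi⟩
  · exact hp i a hpi
  · exact hq i a hqi

theorem condLE_amalgam_left [Preorder α] : condLE (amalgam p q) p :=
  fun i a h => ⟨a, by simp [amalgam, h], le_rfl⟩

theorem condLE_amalgam_right [Preorder α] (hagree : ∀ i ∈ dom p ∩ dom q, p i = q i) :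
    condLE (amalgam p q) q := by
  intro i a hqi
  refine ⟨a, ?_, le_rfl⟩
  show (p i).or (q i) = some a
  by_cases hpi : p i = none
  · rw [hpi, Option.none_or, hqi]
  · rw [hagree i ⟨hpi, by simp [dom, hqi]⟩, hqi, Option.some_or]

theorem compatible_of_agree_on_inter [Preorder α] {V : ι → Set α}
    (hp : FinSupp p) (hpV : Valid V p) (hq : FinSupp q) (hqV : Valid V q)
    (hagree : ∀ i ∈ dom p ∩ dom q, p i = q i) : Compatible V p q :=
  ⟨amalgam p q, hp.amalgam hq, hpV.amalgam hqV, condLE_amalgam_left,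
    condLE_amalgam_right hagree⟩

end Amalgam

section Act

variable (π : Equiv.Perm (ι × ℕ)) {q : Cond ι α}

theorem dom_act : dom (act π q) = π '' dom q := by
  rw [Equiv.image_eq_preimage_symm]
  rfl

theorem FinSupp.act (hq : FinSupp q) : FinSupp (act π q) := by
  rw [FinSupp, dom_act]
  exact hq.image π

variable {π}

theorem Valid.act {V : ι → Set α} (hq : Valid V q) (hπ : ∀ i, (π i).1 = i.1) :
    Valid V (act π q) := by
  intro i a h
  have := hq _ a h
  rwa [← hπ (π.symm i), π.apply_symm_apply] at this

theorem act_apply_of_apply_eq {i : ι × ℕ} (hi : π i = i) : act π q i = q i :=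
  congrArg q (π.symm_apply_eq.2 hi.symm)

end Act

theorem agree_on_slice_compatible_general [Preorder α] (V : ι → Set α)
    (s : Set (ι × ℕ))
    (p q : Cond ι α)
    (hp : FinSupp p ∧ Valid V p) (hq : FinSupp q ∧ Valid V q)
    (hagree : ∀ i ∈ s, p i = q i)
    (π : Equiv.Perm (ι × ℕ))
    (hpres : ∀ i : ι × ℕ, (π i).1 = i.1)
    (hfix : ∀ i ∈ s, π i = i)
    (hdom : dom p ∩ (π '' dom q) ⊆ s) :
    ∃ r : Cond ι α, FinSupp r ∧ Valid V r ∧ condLE r p ∧ condLE r (act π q) := by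
  refine compatible_of_agree_on_inter hp.1 hp.2 (hq.1.act π) (hq.2.act hpres) ?_
  rintro i ⟨hip, hiq⟩
  have his : i ∈ s := hdom ⟨hip, dom_act π ▸ hiq⟩
  rw [hagree i his, act_apply_of_apply_eq (hfix i his)]

/-- if `p, q` agree on the slice `s`, and `π ∈ Aut(ω₁×ω, ω)` fixes
`s` pointwise with `dom p ∩ π[dom q] ⊆ s`, then `p` and `π*(q)` are compatible. -/
theorem agree_on_slice_compatible [Preorder α] (V : ι → Set α)
    (s : Set (ι × ℕ)) (hslice : ∃ X : Set ι, s = X ×ˢ (Set.univ : Set ℕ))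
    (p q : Cond ι α)
    (hp : FinSupp p ∧ Valid V p) (hq : FinSupp q ∧ Valid V q)
    (hagree : ∀ i ∈ s, p i = q i)
    (π : Equiv.Perm (ι × ℕ))
    (hpres : ∀ i : ι × ℕ, (π i).1 = i.1)
    (hfix : ∀ i ∈ s, π i = i)
    (hdom : dom p ∩ (π '' dom q) ⊆ s) :
    ∃ r : Cond ι α, FinSupp r ∧ Valid V r ∧ condLE r p ∧ condLE r (act π q) :=
  agree_on_slice_compatible_general V s p q hp hq hagree π hpres hfix hdom
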